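/- arXiv:0910.4749 — 2 statements merged into one kernel-verified Lean document; each statement's English description precedes it below -/
import Mathlib

section
/- Let U ⊆ ℝ² be an open set and f : U → ℝ a smooth function whose partial derivatives f_x and f_y are nowhere zero on U. Set H = f_{xy}/(f_x·f_y) and define the 1-forms ω₁ = −f_x dx, ω₂ = −f_y dy, ω₃ = df, and γ = −H·df on U. Then the structure equations dω₁ = ω₁ ∧ γ, dω₂ = ω₂ ∧ γ, and dω₃ = ω₃ ∧ γ hold, and γ is the unique 1-form on U satisfying the first two of these equations. -/
/-- Partial derivative with respect to the first coordinate. -/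
noncomputable def pdx (f : ℝ × ℝ → ℝ) : ℝ × ℝ → ℝ :=
  fun q => deriv (fun t => f (t, q.2)) q.1

/-- Partial derivative with respect to the second coordinate. -/
noncomputable def pdy (f : ℝ × ℝ → ℝ) : ℝ × ℝ → ℝ :=
  fun q => deriv (fun t => f (q.1, t)) q.2

/-- The vector field `∂₁ = -(1/f_x)·∂/∂x` applied to a function `p`. -/
noncomputable def D1 (f p : ℝ × ℝ → ℝ) : ℝ × ℝ → ℝ :=
  fun q => -(pdx p q) / pdx f q

/-- The vector field `∂₂ = -(1/f_y)·∂/∂y` applied to a function `p`. -/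
noncomputable def D2 (f p : ℝ × ℝ → ℝ) : ℝ × ℝ → ℝ :=
  fun q => -(pdy p q) / pdy f q

/-- `H = f_{xy}/(f_x·f_y)`. -/
noncomputable def Hf (f : ℝ × ℝ → ℝ) : ℝ × ℝ → ℝ :=
  fun q => pdy (pdx f) q / (pdx f q * pdy f q)

/-- A differential 1-form `a dx + c dy` on (an open subset of) `ℝ²`, recorded by its
pair of coefficient functions `(a, c)`. -/
abbrev Form1 : Type := (ℝ × ℝ → ℝ) × (ℝ × ℝ → ℝ)

/-- The coefficient of `dx ∧ dy` in the wedge product of two 1-forms. -/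
noncomputable def wedge (α β : Form1) : ℝ × ℝ → ℝ :=
  fun q => α.1 q * β.2 q - α.2 q * β.1 q

/-- The coefficient of `dx ∧ dy` in the exterior derivative of a 1-form. -/
noncomputable def extd (α : Form1) : ℝ × ℝ → ℝ :=
  fun q => pdx α.2 q - pdy α.1 q

/-- Multiplication of a 1-form by a function. -/
noncomputable def smul1 (s : ℝ × ℝ → ℝ) (α : Form1) : Form1 :=
  (fun q => s q * α.1 q, fun q => s q * α.2 q)

/-- The coordinate 1-form `dx`. -/
noncomputable def dX : Form1 := (fun _ => 1, fun _ => 0)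

/-- The coordinate 1-form `dy`. -/
noncomputable def dY : Form1 := (fun _ => 0, fun _ => 1)


open Filter Topology in
lemma pdx_eq_fderiv (g : ℝ × ℝ → ℝ) (q : ℝ × ℝ) (hg : DifferentiableAt ℝ g q) :
    pdx g q = fderiv ℝ g q (1, 0) := by
  have h : HasDerivAt (fun t : ℝ => (t, q.2)) ((1 : ℝ), (0 : ℝ)) q.1 :=
    (hasDerivAt_id q.1).prodMk (hasDerivAt_const q.1 q.2)
  exact (hg.hasFDerivAt.comp_hasDerivAt q.1 h).deriv

lemma pdy_eq_fderiv (g : ℝ × ℝ → ℝ) (q : ℝ × ℝ) (hg : DifferentiableAt ℝ g q) :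
    pdy g q = fderiv ℝ g q (0, 1) := by
  have h : HasDerivAt (fun t : ℝ => (q.1, t)) ((0 : ℝ), (1 : ℝ)) q.2 :=
    (hasDerivAt_const q.2 q.1).prodMk (hasDerivAt_id q.2)
  exact (hg.hasFDerivAt.comp_hasDerivAt q.2 h).deriv

open Filter Topology in
lemma clairaut (U : Set (ℝ × ℝ)) (hU : IsOpen U) (f : ℝ × ℝ → ℝ)
    (hf : ContDiffOn ℝ (⊤ : ℕ∞) f U) {q : ℝ × ℝ} (hq : q ∈ U) :
    pdy (pdx f) q = pdx (pdy f) q := by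
  have hmem : U ∈ 𝓝 q := hU.mem_nhds hq
  have hct : ContDiffAt ℝ (⊤ : ℕ∞) f q := hf.contDiffAt hmem
  have hder : DifferentiableAt ℝ (fderiv ℝ f) q :=
    (hct.fderiv_right (m := 1) (by decide)).differentiableAt one_ne_zero
  have hdiffat : ∀ p ∈ U, DifferentiableAt ℝ f p := fun p hp =>
    (hf.contDiffAt (hU.mem_nhds hp)).differentiableAt (by decide)
  -- eventual identification of pdx f, pdy f with fderiv evaluation
  have hx : pdx f =ᶠ[𝓝 q] fun p => fderiv ℝ f p (1, 0) := by
    filter_upwards [hmem] with p hp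
    exact pdx_eq_fderiv f p (hdiffat p hp)
  have hy : pdy f =ᶠ[𝓝 q] fun p => fderiv ℝ f p (0, 1) := by
    filter_upwards [hmem] with p hp
    exact pdy_eq_fderiv f p (hdiffat p hp)
  have hdg : ∀ v : ℝ × ℝ, DifferentiableAt ℝ (fun p => fderiv ℝ f p v) q := fun v =>
    (ContinuousLinearMap.apply ℝ ℝ v).differentiableAt.comp q hder
  have hfd : ∀ v : ℝ × ℝ, fderiv ℝ (fun p => fderiv ℝ f p v) q
      = (ContinuousLinearMap.apply ℝ ℝ v).comp (fderiv ℝ (fderiv ℝ f) q) := fun v =>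
    ((ContinuousLinearMap.apply ℝ ℝ v).hasFDerivAt.comp q hder.hasFDerivAt).fderiv
  have hsymm : IsSymmSndFDerivAt ℝ f q := hct.isSymmSndFDerivAt (by simp [minSmoothness_of_isRCLikeNormedField]; exact WithTop.coe_le_coe.mpr le_top)
  -- pdy (pdx f) q
  have e1 : pdy (pdx f) q = fderiv ℝ (fderiv ℝ f) q (0, 1) (1, 0) := by
    have hcong : pdy (pdx f) q = pdy (fun p => fderiv ℝ f p (1, 0)) q := by
      unfold pdy
      apply Filter.EventuallyEq.deriv_eq
      exact hx.comp_tendsto ((Continuous.prodMk_right q.1).tendsto q.2)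
    rw [hcong, pdy_eq_fderiv _ _ (hdg (1, 0)), hfd (1, 0)]
    rfl
  have e2 : pdx (pdy f) q = fderiv ℝ (fderiv ℝ f) q (1, 0) (0, 1) := by
    have hcong : pdx (pdy f) q = pdx (fun p => fderiv ℝ f p (0, 1)) q := by
      unfold pdx
      apply Filter.EventuallyEq.deriv_eq
      exact hy.comp_tendsto ((continuous_id.prodMk continuous_const).tendsto q.1)
    rw [hcong, pdx_eq_fderiv _ _ (hdg (0, 1)), hfd (0, 1)]
    rfl
  rw [e1, e2, hsymm.eq]

/-- with `H = f_{xy}/(f_x f_y)` and `γ = -H·df`, the structure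
equations `dωᵢ = ωᵢ ∧ γ` (i = 1,2,3) hold on `U`, and `γ` is the unique 1-form
on `U` satisfying the first two of them. -/
theorem chern_connection_structure_equations
    (U : Set (ℝ × ℝ)) (hU : IsOpen U)
    (f : ℝ × ℝ → ℝ) (hf : ContDiffOn ℝ (⊤ : ℕ∞) f U)
    (hfx : ∀ q ∈ U, pdx f q ≠ 0) (hfy : ∀ q ∈ U, pdy f q ≠ 0)
    (ω₁ ω₂ ω₃ γ : Form1)
    (h1 : ω₁ = (fun q => -pdx f q, fun _ => 0))
    (h2 : ω₂ = (fun _ => 0, fun q => -pdy f q))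
    (h3 : ω₃ = (fun q => pdx f q, fun q => pdy f q))
    (hγ : γ = (fun q => -(Hf f q * pdx f q), fun q => -(Hf f q * pdy f q))) :
    ((∀ q ∈ U, extd ω₁ q = wedge ω₁ γ q) ∧
     (∀ q ∈ U, extd ω₂ q = wedge ω₂ γ q) ∧
     (∀ q ∈ U, extd ω₃ q = wedge ω₃ γ q)) ∧
    (∀ γ' : Form1,
      (∀ q ∈ U, extd ω₁ q = wedge ω₁ γ' q) →
      (∀ q ∈ U, extd ω₂ q = wedge ω₂ γ' q) →
      ∀ q ∈ U, γ'.1 q = γ.1 q ∧ γ'.2 q = γ.2 q) := by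
  subst h1 h2 h3 hγ
  have key : ∀ q ∈ U, pdy (pdx f) q = pdx (pdy f) q := fun q hq => clairaut U hU f hf hq
  have hpdx0 : ∀ q : ℝ × ℝ, pdx (fun _ : ℝ × ℝ => (0:ℝ)) q = 0 := fun q => deriv_const _ _
  have hpdy0 : ∀ q : ℝ × ℝ, pdy (fun _ : ℝ × ℝ => (0:ℝ)) q = 0 := fun q => deriv_const _ _
  have hnegx : ∀ (g : ℝ × ℝ → ℝ) (q : ℝ × ℝ), pdx (fun p => -g p) q = -pdx g q := by
    intro g q; unfold pdx; exact deriv.neg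
  have hnegy : ∀ (g : ℝ × ℝ → ℝ) (q : ℝ × ℝ), pdy (fun p => -g p) q = -pdy g q := by
    intro g q; unfold pdy; exact deriv.neg
  constructor
  · refine ⟨fun q hq => ?_, fun q hq => ?_, fun q hq => ?_⟩
    · have hx := hfx q hq; have hy := hfy q hq
      simp only [extd, wedge, Hf, hpdx0, hnegy]
      field_simp
      ring
    · have hx := hfx q hq; have hy := hfy q hq
      simp only [extd, wedge, Hf, hpdy0, hnegx, key q hq]
      field_simp
      ring
    · have hx := hfx q hq; have hy := hfy q hq
      simp only [extd, wedge, Hf, key q hq]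
      field_simp
      ring
  · intro γ' hA hB q hq
    have hx := hfx q hq; have hy := hfy q hq
    have hA' := hA q hq
    have hB' := hB q hq
    simp only [extd, wedge, Hf, hpdx0, hpdy0, hnegx, hnegy, key q hq] at hA' hB' ⊢
    constructor
    · have hγ1 : γ'.1 q = -pdx (pdy f) q / pdy f q := by
        rw [eq_div_iff hy]; linear_combination -hB'
      rw [hγ1]; field_simp
    · have hγ2 : γ'.2 q = -pdx (pdy f) q / pdx f q := by
        rw [eq_div_iff hx]; linear_combination hA'
      rw [hγ2]; field_simp
end

section
/- Let U ⊆ ℝ² be an open set, f : U → ℝ smooth with f_x and f_y nowhere zero on U, and b : U → ℝ a smooth function. Set H = f_{xy}/(f_x·f_y), ∂₁ = −(1/f_x)·∂/∂x, ∂₂ = −(1/f_y)·∂/∂y, and ω₄ = f_x dx + b·f_y dy. Then for a smooth function t₂ : U → ℝ, the 1-form t₂·ω₄ is closed on U if and only if ∂₂(t₂) − b·∂₁(t₂) − t₂·(∂₁(b) − (b − 1)·H) = 0 on U. -/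
open Filter Topology

private lemma slice_x_hasDerivAt {u : ℝ × ℝ → ℝ} {q : ℝ × ℝ}
    (hu : DifferentiableAt ℝ u q) :
    HasDerivAt (fun t => u (t, q.2)) (fderiv ℝ u q (1, 0)) q.1 := by
  have h1 : HasDerivAt (fun t : ℝ => (t, q.2)) ((1 : ℝ), (0 : ℝ)) q.1 :=
    HasDerivAt.prodMk (hasDerivAt_id q.1) (hasDerivAt_const _ _)
  have h2 : HasFDerivAt u (fderiv ℝ u q) (q.1, q.2) := by
    simpa using hu.hasFDerivAt
  exact h2.comp_hasDerivAt q.1 h1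

private lemma slice_y_hasDerivAt {u : ℝ × ℝ → ℝ} {q : ℝ × ℝ}
    (hu : DifferentiableAt ℝ u q) :
    HasDerivAt (fun t => u (q.1, t)) (fderiv ℝ u q (0, 1)) q.2 := by
  have h1 : HasDerivAt (fun t : ℝ => (q.1, t)) ((0 : ℝ), (1 : ℝ)) q.2 :=
    HasDerivAt.prodMk (hasDerivAt_const _ _) (hasDerivAt_id q.2)
  have h2 : HasFDerivAt u (fderiv ℝ u q) (q.1, q.2) := by
    simpa using hu.hasFDerivAt
  exact h2.comp_hasDerivAt q.2 h1

private lemma pdx_congr {u v : ℝ × ℝ → ℝ} {q : ℝ × ℝ} (h : u =ᶠ[𝓝 q] v) :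
    pdx u q = pdx v q := by
  have ht : Tendsto (fun t : ℝ => (t, q.2)) (𝓝 q.1) (𝓝 q) := by
    have := (continuous_id.prodMk (continuous_const (y := q.2))).tendsto q.1
    simpa using this
  exact Filter.EventuallyEq.deriv_eq (h.comp_tendsto ht)

private lemma pdy_congr {u v : ℝ × ℝ → ℝ} {q : ℝ × ℝ} (h : u =ᶠ[𝓝 q] v) :
    pdy u q = pdy v q := by
  have ht : Tendsto (fun t : ℝ => (q.1, t)) (𝓝 q.2) (𝓝 q) := by
    have := ((continuous_const (y := q.1)).prodMk continuous_id).tendsto q.2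
    simpa using this
  exact Filter.EventuallyEq.deriv_eq (h.comp_tendsto ht)

/-- the fourth Samuelson equation: with `ω₄ = f_x dx + b·f_y dy`,
the 1-form `t₂·ω₄` is closed on `U` iff
`∂₂(t₂) - b·∂₁(t₂) - t₂·(∂₁(b) - (b - 1)·H) = 0` on `U`. -/
theorem fourth_samuelson_equation
    (U : Set (ℝ × ℝ)) (hU : IsOpen U)
    (f : ℝ × ℝ → ℝ) (hf : ContDiffOn ℝ (⊤ : ℕ∞) f U)
    (hfx : ∀ q ∈ U, pdx f q ≠ 0) (hfy : ∀ q ∈ U, pdy f q ≠ 0)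
    (b : ℝ × ℝ → ℝ) (hb : ContDiffOn ℝ (⊤ : ℕ∞) b U)
    (ω₄ : Form1)
    (h4 : ω₄ = (fun q => pdx f q, fun q => b q * pdy f q))
    (t₂ : ℝ × ℝ → ℝ) (ht₂ : ContDiffOn ℝ (⊤ : ℕ∞) t₂ U) :
    (∀ q ∈ U, extd (smul1 t₂ ω₄) q = 0) ↔
      (∀ q ∈ U, D2 f t₂ q - b q * D1 f t₂ q
          - t₂ q * (D1 f b q - (b q - 1) * Hf f q) = 0) := by
  subst h4
  have key : ∀ q ∈ U, extd (smul1 t₂ (fun q => pdx f q, fun q => b q * pdy f q)) q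
      = (pdx f q * pdy f q) *
        (D2 f t₂ q - b q * D1 f t₂ q - t₂ q * (D1 f b q - (b q - 1) * Hf f q)) := by
    intro q hq
    set g := fderiv ℝ f with hgdef
    have hfd : ∀ p ∈ U, DifferentiableAt ℝ f p := fun p hp =>
      (hf.contDiffAt (hU.mem_nhds hp)).differentiableAt (by simp)
    have hg : ContDiffAt ℝ (⊤ : ℕ∞) g q :=
      (hf.contDiffAt (hU.mem_nhds hq)).fderiv_right (by simp)
    set Fx : ℝ × ℝ → ℝ := fun p => g p (1, 0) with hFxdef
    set Fy : ℝ × ℝ → ℝ := fun p => g p (0, 1) with hFydef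
    have hFx : ContDiffAt ℝ (⊤ : ℕ∞) Fx q := hg.clm_apply contDiffAt_const
    have hFy : ContDiffAt ℝ (⊤ : ℕ∞) Fy q := hg.clm_apply contDiffAt_const
    have hFxd : DifferentiableAt ℝ Fx q := hFx.differentiableAt (by simp)
    have hFyd : DifferentiableAt ℝ Fy q := hFy.differentiableAt (by simp)
    have ht2d : DifferentiableAt ℝ t₂ q :=
      (ht₂.contDiffAt (hU.mem_nhds hq)).differentiableAt (by simp)
    have hbd : DifferentiableAt ℝ b q :=
      (hb.contDiffAt (hU.mem_nhds hq)).differentiableAt (by simp)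
    have hex : pdx f =ᶠ[𝓝 q] Fx := by
      filter_upwards [hU.mem_nhds hq] with p hp
      exact (slice_x_hasDerivAt (hfd p hp)).deriv
    have hey : pdy f =ᶠ[𝓝 q] Fy := by
      filter_upwards [hU.mem_nhds hq] with p hp
      exact (slice_y_hasDerivAt (hfd p hp)).deriv
    have hexq : pdx f q = Fx q := hex.self_of_nhds
    have heyq : pdy f q = Fy q := hey.self_of_nhds
    have hgd : DifferentiableAt ℝ g q := hg.differentiableAt (by simp)
    have hsymm : fderiv ℝ g q (1, 0) (0, 1) = fderiv ℝ g q (0, 1) (1, 0) := by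
      have hev : ∀ᶠ y in 𝓝 q, HasFDerivAt f (g y) y := by
        filter_upwards [hU.mem_nhds hq] with p hp
        exact (hfd p hp).hasFDerivAt
      exact second_derivative_symmetric_of_eventually hev hgd.hasFDerivAt _ _
    have hfderivFx : fderiv ℝ Fx q
        = (ContinuousLinearMap.apply ℝ ℝ ((1:ℝ),(0:ℝ))).comp (fderiv ℝ g q) :=
      ((ContinuousLinearMap.apply ℝ ℝ ((1:ℝ),(0:ℝ))).hasFDerivAt.comp q hgd.hasFDerivAt).fderiv
    have hfderivFy : fderiv ℝ Fy q
        = (ContinuousLinearMap.apply ℝ ℝ ((0:ℝ),(1:ℝ))).comp (fderiv ℝ g q) :=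
      ((ContinuousLinearMap.apply ℝ ℝ ((0:ℝ),(1:ℝ))).hasFDerivAt.comp q hgd.hasFDerivAt).fderiv
    -- mixed partials: pdy Fx q = fderiv Fy q (1,0)
    have hmixv : pdy Fx q = fderiv ℝ Fy q (1, 0) := by
      have h1 : pdy Fx q = fderiv ℝ Fx q (0, 1) := (slice_y_hasDerivAt hFxd).deriv
      rw [h1, hfderivFx, hfderivFy]
      simpa using hsymm.symm
    have hHf : pdy (pdx f) q = fderiv ℝ Fy q (1, 0) := (pdy_congr hex).trans hmixv
    -- one-variable partials as fderiv values
    have hdtx : pdx t₂ q = fderiv ℝ t₂ q (1, 0) := (slice_x_hasDerivAt ht2d).deriv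
    have hdty : pdy t₂ q = fderiv ℝ t₂ q (0, 1) := (slice_y_hasDerivAt ht2d).deriv
    have hdbx : pdx b q = fderiv ℝ b q (1, 0) := (slice_x_hasDerivAt hbd).deriv
    -- partial derivatives of the coefficients of t₂·ω₄
    have hpdx2 : pdx (fun p => t₂ p * (b p * pdy f p)) q
        = fderiv ℝ t₂ q (1, 0) * (b q * Fy q)
          + t₂ q * (fderiv ℝ b q (1, 0) * Fy q + b q * fderiv ℝ Fy q (1, 0)) := by
      have e1 : (fun p => t₂ p * (b p * pdy f p)) =ᶠ[𝓝 q] fun p => t₂ p * (b p * Fy p) := by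
        filter_upwards [hey] with p hp; rw [hp]
      rw [pdx_congr e1]
      have h := ((slice_x_hasDerivAt ht2d).mul
        ((slice_x_hasDerivAt hbd).mul (slice_x_hasDerivAt hFyd))).deriv
      simp only [Prod.mk.eta] at h
      exact h
    have hpdy1 : pdy (fun p => t₂ p * pdx f p) q
        = fderiv ℝ t₂ q (0, 1) * Fx q + t₂ q * fderiv ℝ Fy q (1, 0) := by
      have e1 : (fun p => t₂ p * pdx f p) =ᶠ[𝓝 q] fun p => t₂ p * Fx p := by
        filter_upwards [hex] with p hp; rw [hp]
      rw [pdy_congr e1, ← hmixv]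
      have h := ((slice_y_hasDerivAt ht2d).mul (slice_y_hasDerivAt hFxd)).deriv
      have h2 : pdy Fx q = fderiv ℝ Fx q (0, 1) := (slice_y_hasDerivAt hFxd).deriv
      rw [h2]
      simp only [Prod.mk.eta] at h
      exact h
    have hX : Fx q ≠ 0 := hexq ▸ hfx q hq
    have hY : Fy q ≠ 0 := heyq ▸ hfy q hq
    show pdx (fun p => t₂ p * (b p * pdy f p)) q - pdy (fun p => t₂ p * pdx f p) q = _
    rw [hpdx2, hpdy1]
    simp only [D1, D2, Hf]
    rw [hHf, hexq, heyq, hdtx, hdty, hdbx]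
    field_simp
    ring
  constructor
  · intro h q hq
    have h2 := key q hq
    rw [h q hq] at h2
    rcases mul_eq_zero.mp h2.symm with h0 | h0
    · exact absurd h0 (mul_ne_zero (hfx q hq) (hfy q hq))
    · exact h0
  · intro h q hq
    rw [key q hq, h q hq, mul_zero]
end
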